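/- arXiv:1709.03142 — 5 statements merged into one kernel-verified Lean document; each statement's English description precedes it below -/
import Mathlib

section
/- Let 0<α<1, a>0, N a positive integer, h=a/N, grid points x_s = s·h, and let n ∈ {1,…,N}. For every continuously differentiable function φ:[0,x_n]→ℝ, the quadrature error of the fractional midpoint rule satisfies E_h(φ)(x_n) = h^{α+1} Σ_{j=1}^n τ_{n−j} φ'(x_{j−1/2}) + I^α(φ − q_h φ)(x_n), where q_h φ is the piecewise linear function defined by (q_h φ)(y) = φ(x_{j−1/2}) + (y − x_{j−1/2}) φ'(x_{j−1/2}) for x_{j−1} ≤ y < x_j (j = 1,…,n), with this definition extended to y = x_n in the case j = n. -/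
open Real MeasureTheory

/-- Midpoint quadrature weights `ω_m = ((m+1)^α − m^α)/Γ(α+1)`. -/
noncomputable def omegaW (α : ℝ) (m : ℕ) : ℝ :=
  (((m : ℝ) + 1) ^ α - (m : ℝ) ^ α) / Real.Gamma (α + 1)

/-- Coefficients `τ_m = ((m+1)^{α+1} − m^{α+1})/Γ(α+2) − ((m+1)^α + m^α)/(2Γ(α+1))`. -/
noncomputable def tauW (α : ℝ) (m : ℕ) : ℝ :=
  (((m : ℝ) + 1) ^ (α + 1) - (m : ℝ) ^ (α + 1)) / Real.Gamma (α + 2)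
    - (((m : ℝ) + 1) ^ α + (m : ℝ) ^ α) / (2 * Real.Gamma (α + 1))

/-- Abel integral operator `(I^α φ)(x) = (1/Γ(α)) ∫₀ˣ (x−y)^{α−1} φ(y) dy`. -/
noncomputable def abelI (α : ℝ) (φ : ℝ → ℝ) (x : ℝ) : ℝ :=
  (1 / Real.Gamma α) * ∫ y in (0 : ℝ)..x, (x - y) ^ (α - 1) * φ y

/-- Piecewise linear interpolant: `(q_h φ)(y) = φ(x_{j−1/2}) + (y − x_{j−1/2}) φ'(x_{j−1/2})`
for `x_{j−1} ≤ y < x_j`, extended to `y = x_n` in the case `j = n`. -/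
noncomputable def qhInterp (φ φd : ℝ → ℝ) (h : ℝ) (n : ℕ) (y : ℝ) : ℝ :=
  let m : ℝ := if y = (n : ℝ) * h then (n : ℝ) * h - h / 2 else (⌊y / h⌋ : ℝ) * h + h / 2
  φ m + (y - m) * φd m

/-!
On the cell `[x_{j-1}, x_j]` the interpolant `q_h φ` is affine about the midpoint `x_{j-1/2}`, so
`I^α (q_h φ)(x_n)` is a sum of the explicit integrals of `(x_n - y)^{α-1}` and
`(x_n - y)^{α-1} (y - x_{j-1/2})` over the cells. Writing `y - x_{j-1/2} = (x_n - x_{j-1/2}) - (x_n - y)`,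
both reduce to integrals of powers of `x_n - y`, which evaluate to `Γ(α) h^α ω_{n-j}` and
`Γ(α) h^{α+1} τ_{n-j}`. The identity then follows from the linearity of `I^α`.
-/

lemma intervalIntegrable_sub_rpow {r : ℝ} (hr : -1 < r) (x a b : ℝ) :
    IntervalIntegrable (fun y => (x - y) ^ r) volume a b := by
  simpa using (intervalIntegral.intervalIntegrable_rpow' hr (a := x - a) (b := x - b)).comp_sub_left x

lemma integral_sub_rpow {r : ℝ} (hr : -1 < r) (x a b : ℝ) :
    ∫ y in a..b, (x - y) ^ r = ((x - a) ^ (r + 1) - (x - b) ^ (r + 1)) / (r + 1) := by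
  rw [intervalIntegral.integral_comp_sub_left (fun u => u ^ r) x, integral_rpow (Or.inl hr)]

lemma integral_sub_rpow_cell {r h : ℝ} (hr : -1 < r) (hh : 0 ≤ h) (x : ℝ) (M : ℕ) :
    ∫ y in (x - (M + 1) * h)..(x - M * h), (x - y) ^ r
      = (((M : ℝ) + 1) ^ (r + 1) - (M : ℝ) ^ (r + 1)) / (r + 1) * h ^ (r + 1) := by
  rw [integral_sub_rpow hr, sub_sub_cancel, sub_sub_cancel, mul_rpow (by positivity) hh,
    mul_rpow (by positivity) hh]
  ring

section Cell

variable {α h : ℝ} (hα : 0 < α) (hh : 0 ≤ h) (x : ℝ) (M : ℕ)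
include hα hh

lemma integral_cell_rpow_sub_one :
    ∫ y in (x - (M + 1) * h)..(x - M * h), (x - y) ^ (α - 1) = Gamma α * h ^ α * omegaW α M := by
  rw [integral_sub_rpow_cell (by linarith) hh, sub_add_cancel, omegaW, Gamma_add_one hα.ne']
  field_simp

lemma integral_cell_rpow_sub_one_mul_sub_midpoint :
    ∫ y in (x - (M + 1) * h)..(x - M * h), (x - y) ^ (α - 1) * (y - (x - (M + 1 / 2) * h))
      = Gamma α * h ^ (α + 1) * tauW α M := by
  have hsplit : Set.EqOn (fun y => (x - y) ^ (α - 1) * (y - (x - (M + 1 / 2) * h)))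
      (fun y => (M + 1 / 2) * h * (x - y) ^ (α - 1) - (x - y) ^ α)
      (Set.uIcc (x - (M + 1) * h) (x - M * h)) := by
    intro y hy
    rw [Set.uIcc_of_le (by nlinarith)] at hy
    have := rpow_add_one' (x := x - y) (y := α - 1) (by nlinarith [hy.2]) (by linarith)
    rw [sub_add_cancel] at this
    simp only [this]
    ring
  have hr : -1 < α - 1 := by linarith
  rw [intervalIntegral.integral_congr hsplit, intervalIntegral.integral_sub
      ((intervalIntegrable_sub_rpow hr _ _ _).const_mul _)
      (intervalIntegrable_sub_rpow (by linarith) _ _ _),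
    intervalIntegral.integral_const_mul, integral_cell_rpow_sub_one hα hh,
    integral_sub_rpow_cell (by linarith) hh, tauW, omegaW,
    show α + 2 = α + 1 + 1 by ring, Gamma_add_one (s := α + 1) (by linarith),
    Gamma_add_one hα.ne',
    rpow_add_one' (by positivity) (by linarith), rpow_add_one' (by positivity) (by linarith),
    rpow_add_one' hh (by linarith)]
  field_simp
  ring

lemma integral_cell_rpow_sub_one_mul_affine (C D : ℝ) :
    ∫ y in (x - (M + 1) * h)..(x - M * h), (x - y) ^ (α - 1) * (C + (y - (x - (M + 1 / 2) * h)) * D)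
      = Gamma α * (h ^ α * omegaW α M * C + h ^ (α + 1) * tauW α M * D) := by
  have hr : -1 < α - 1 := by linarith
  have hsplit : (fun y => (x - y) ^ (α - 1) * (C + (y - (x - (M + 1 / 2) * h)) * D))
      = fun y => C * (x - y) ^ (α - 1) + D * ((x - y) ^ (α - 1) * (y - (x - (M + 1 / 2) * h))) := by
    funext y; ring
  rw [hsplit, intervalIntegral.integral_add ((intervalIntegrable_sub_rpow hr _ _ _).const_mul _)
      (((intervalIntegrable_sub_rpow hr _ _ _).mul_continuousOn (by fun_prop)).const_mul _),
    intervalIntegral.integral_const_mul, intervalIntegral.integral_const_mul,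
    integral_cell_rpow_sub_one hα hh, integral_cell_rpow_sub_one_mul_sub_midpoint hα hh]
  ring

end Cell

section Interpolant

variable {α h : ℝ} (φ φd : ℝ → ℝ) (n : ℕ)

lemma qhInterp_eqOn_Ico (hh : 0 < h) {k : ℕ} (hk : k < n) :
    Set.EqOn (qhInterp φ φd h n)
      (fun y => φ (k * h + h / 2) + (y - (k * h + h / 2)) * φd (k * h + h / 2))
      (Set.Ico (k * h) ((k + 1) * h)) := by
  intro y hy
  have hyn : y ≠ n * h := by
    have : ((k : ℝ) + 1) * h ≤ n * h := by gcongr; exact_mod_cast hk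
    exact (hy.2.trans_le this).ne
  have hfloor : ⌊y / h⌋ = k := by
    rw [Int.floor_eq_iff, le_div_iff₀ hh, div_lt_iff₀ hh]
    exact_mod_cast hy
  simp only [qhInterp, if_neg hyn, hfloor, Int.cast_natCast]

lemma rpow_sub_one_mul_qhInterp_eqOn_uIoo (hh : 0 < h) {k : ℕ} (hk : k < n) :
    Set.EqOn (fun y => (n * h - y) ^ (α - 1) * qhInterp φ φd h n y)
      (fun y => (n * h - y) ^ (α - 1) *
        (φ (k * h + h / 2) + (y - (k * h + h / 2)) * φd (k * h + h / 2)))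
      (Set.uIoo (k * h) ((k + 1) * h)) := by
  rw [Set.uIoo_of_le (by nlinarith)]
  intro y hy
  simp only [qhInterp_eqOn_Ico φ φd n hh hk (Set.Ioo_subset_Ico_self hy)]

variable (hα : 0 < α) (hh : 0 < h)
include hα hh

lemma intervalIntegrable_cell_qhInterp {k : ℕ} (hk : k < n) :
    IntervalIntegrable (fun y => (n * h - y) ^ (α - 1) * qhInterp φ φd h n y) volume
      (k * h) ((k + 1) * h) :=
  ((intervalIntegrable_sub_rpow (by linarith) _ _ _).mul_continuousOn (by fun_prop)).congr_uIoo
    (rpow_sub_one_mul_qhInterp_eqOn_uIoo φ φd n hh hk).symm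

lemma integral_cell_qhInterp {k : ℕ} (hk : k < n) :
    ∫ y in (k * h)..((k + 1) * h), (n * h - y) ^ (α - 1) * qhInterp φ φd h n y
      = Gamma α * (h ^ α * omegaW α (n - (k + 1)) * φ (k * h + h / 2)
        + h ^ (α + 1) * tauW α (n - (k + 1)) * φd (k * h + h / 2)) := by
  set M := n - (k + 1)
  have hM : (M : ℝ) = n - k - 1 := by simp only [M]; push_cast [Nat.cast_sub hk]; ring
  have hleft : (n * h - (M + 1) * h : ℝ) = k * h := by rw [hM]; ring
  have hright : (n * h - M * h : ℝ) = (k + 1) * h := by rw [hM]; ring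
  have hmid : (n * h - (M + 1 / 2) * h : ℝ) = k * h + h / 2 := by rw [hM]; ring
  have := integral_cell_rpow_sub_one_mul_affine hα hh.le (n * h) M
    (φ (k * h + h / 2)) (φd (k * h + h / 2))
  rw [hleft, hright, hmid] at this
  rw [intervalIntegral.integral_congr_uIoo (rpow_sub_one_mul_qhInterp_eqOn_uIoo φ φd n hh hk),
    this]

lemma intervalIntegrable_rpow_sub_one_mul_qhInterp :
    IntervalIntegrable (fun y => (n * h - y) ^ (α - 1) * qhInterp φ φd h n y) volume 0 (n * h) := by
  simpa using IntervalIntegrable.trans_iterate (a := fun k : ℕ => (k : ℝ) * h)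
    fun k hk => by simpa using intervalIntegrable_cell_qhInterp φ φd n hα hh hk

lemma abelI_qhInterp :
    abelI α (qhInterp φ φd h n) (n * h)
      = h ^ α * ∑ j ∈ Finset.Icc 1 n, omegaW α (n - j) * φ (j * h - h / 2)
        + h ^ (α + 1) * ∑ j ∈ Finset.Icc 1 n, tauW α (n - j) * φd (j * h - h / 2) := by
  have hsum := intervalIntegral.sum_integral_adjacent_intervals (a := fun k : ℕ => (k : ℝ) * h)
    fun k hk => by simpa using intervalIntegrable_cell_qhInterp φ φd n hα hh hk
  simp only [Nat.cast_zero, zero_mul, Nat.cast_add, Nat.cast_one] at hsum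
  rw [abelI, ← hsum, Finset.sum_congr rfl fun k hk => integral_cell_qhInterp φ φd n hα hh
    (Finset.mem_range.mp hk), ← Finset.Ico_add_one_right_eq_Icc, Finset.sum_Ico_eq_sum_range,
    Finset.sum_Ico_eq_sum_range, Nat.add_sub_cancel, Finset.mul_sum, Finset.mul_sum,
    Finset.mul_sum, ← Finset.sum_add_distrib]
  refine Finset.sum_congr rfl fun k _ => ?_
  rw [one_div, inv_mul_cancel_left₀ (Gamma_pos_of_pos hα).ne', Nat.add_comm 1 k]
  push_cast
  rw [show ((k : ℝ) + 1) * h - h / 2 = k * h + h / 2 by ring]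
  ring

end Interpolant

lemma abelI_sub {α x : ℝ} {f g : ℝ → ℝ}
    (hf : IntervalIntegrable (fun y => (x - y) ^ (α - 1) * f y) volume 0 x)
    (hg : IntervalIntegrable (fun y => (x - y) ^ (α - 1) * g y) volume 0 x) :
    abelI α (fun y => f y - g y) x = abelI α f x - abelI α g x := by
  simp only [abelI, mul_sub]
  rw [intervalIntegral.integral_sub hf hg, mul_sub]

theorem stmt_1_general (α a : ℝ) (hα0 : 0 < α) (ha : 0 < a)
    (N : ℕ) (hN : 0 < N) (h : ℝ) (hh : h = a / N)
    (n : ℕ)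
    (φ φd : ℝ → ℝ)
    (hder : ∀ y ∈ Set.Icc (0 : ℝ) ((n : ℝ) * h),
      HasDerivWithinAt φ (φd y) (Set.Icc (0 : ℝ) ((n : ℝ) * h)) y) :
    abelI α φ ((n : ℝ) * h)
        - h ^ α * ∑ j ∈ Finset.Icc 1 n, omegaW α (n - j) * φ ((j : ℝ) * h - h / 2)
      = h ^ (α + 1) * ∑ j ∈ Finset.Icc 1 n, tauW α (n - j) * φd ((j : ℝ) * h - h / 2)
        + abelI α (fun y => φ y - qhInterp φ φd h n y) ((n : ℝ) * h) := by
  have hh0 : 0 < h := hh ▸ div_pos ha (Nat.cast_pos.mpr hN)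
  have hφ : ContinuousOn φ (Set.uIcc 0 (n * h)) := by
    rw [Set.uIcc_of_le (by positivity)]
    exact fun y hy => (hder y hy).continuousWithinAt
  rw [abelI_sub ((intervalIntegrable_sub_rpow (by linarith) _ _ _).mul_continuousOn hφ)
    (intervalIntegrable_rpow_sub_one_mul_qhInterp φ φd n hα0 hh0), abelI_qhInterp φ φd n hα0 hh0]
  ring

theorem stmt_1 (α a : ℝ) (hα0 : 0 < α) (hα1 : α < 1) (ha : 0 < a)
    (N : ℕ) (hN : 0 < N) (h : ℝ) (hh : h = a / N)
    (n : ℕ) (hn1 : 1 ≤ n) (hnN : n ≤ N)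
    (φ φd : ℝ → ℝ)
    (hder : ∀ y ∈ Set.Icc (0 : ℝ) ((n : ℝ) * h),
      HasDerivWithinAt φ (φd y) (Set.Icc (0 : ℝ) ((n : ℝ) * h)) y)
    (hcd : ContinuousOn φd (Set.Icc (0 : ℝ) ((n : ℝ) * h))) :
    abelI α φ ((n : ℝ) * h)
        - h ^ α * ∑ j ∈ Finset.Icc 1 n, omegaW α (n - j) * φ ((j : ℝ) * h - h / 2)
      = h ^ (α + 1) * ∑ j ∈ Finset.Icc 1 n, tauW α (n - j) * φd ((j : ℝ) * h - h / 2)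
        + abelI α (fun y => φ y - qhInterp φ φd h n y) ((n : ℝ) * h) :=
  stmt_1_general α a hα0 ha N hN h hh n φ φd hder
end

section
/- Let 0<α<1. There is a constant C>0 such that for all integers n ≥ 1, |τ_n − ((1−α)/(12Γ(α))) n^{α−2}| ≤ C n^{α−3}. In particular Σ_{n=0}^∞ |τ_n| < ∞. -/
open Real

lemma poly_bound (f f' : ℝ → ℝ) (M : ℝ) (m : ℕ)
    (hf : ∀ t, 0 ≤ t → HasDerivAt f (f' t) t)
    (hb : ∀ t, 0 ≤ t → |f' t| ≤ M * t ^ m)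
    (h0 : f 0 = 0) (x : ℝ) (hx : 0 ≤ x) : |f x| ≤ M * x ^ m * x := by
  rcases eq_or_lt_of_le hx with rfl | hx'
  · simp [h0]
  have hM : 0 ≤ M := by
    have h1 := hb x hx
    have h2 : (0:ℝ) ≤ M * x ^ m := le_trans (abs_nonneg _) h1
    nlinarith [pow_pos hx' m]
  have key : ‖f x - f 0‖ ≤ (M * x ^ m) * ‖x - (0:ℝ)‖ := by
    apply Convex.norm_image_sub_le_of_norm_hasDerivWithin_le
      (f' := f') (fun t ht => (hf t ht.1).hasDerivWithinAt)
      (fun t ht => ?_) (convex_Icc 0 x) ⟨le_refl 0, hx⟩ ⟨hx, le_refl x⟩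
    calc ‖f' t‖ = |f' t| := rfl
    _ ≤ M * t ^ m := hb t ht.1
    _ ≤ M * x ^ m := by
        apply mul_le_mul_of_nonneg_left (pow_le_pow_left₀ ht.1 ht.2 m) hM
  simpa [h0, abs_of_nonneg hx] using key

noncomputable def Afun (α : ℝ) (x : ℝ) : ℝ :=
  ((1+x)^(α+1) - 1)/Real.Gamma (α+2) - x*((1+x)^α + 1)/(2*Real.Gamma (α+1))
    - (1-α)/(12*Real.Gamma α) * x^3

noncomputable def A1fun (α : ℝ) (x : ℝ) : ℝ :=
  ((1+x)^α - 1 - α*x*(1+x)^(α-1))/(2*Real.Gamma (α+1))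
    - 3*((1-α)/(12*Real.Gamma α))*x^2

noncomputable def A2fun (α : ℝ) (x : ℝ) : ℝ :=
  (1-α)/(2*Real.Gamma α) * (x * ((1+x)^(α-2) - 1))

lemma gam1 {α : ℝ} (hα0 : 0 < α) : Real.Gamma (α+1) = α * Real.Gamma α :=
  Real.Gamma_add_one hα0.ne'

lemma gam2 {α : ℝ} (hα0 : 0 < α) : Real.Gamma (α+2) = (α+1) * (α * Real.Gamma α) := by
  rw [show α+2 = (α+1)+1 by ring, Real.Gamma_add_one (by positivity), gam1 hα0]

lemma hasDerivA {α : ℝ} (hα0 : 0 < α) :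
    ∀ x, 0 ≤ x → HasDerivAt (Afun α) (A1fun α x) x := by
  intro x hx
  have hbase : (0:ℝ) < 1 + x := by linarith
  have hx1 : HasDerivAt (fun x : ℝ => 1 + x) 1 x := (hasDerivAt_id x).const_add 1
  have h1 : HasDerivAt (fun x : ℝ => (1+x)^(α+1)) ((α+1)*(1+x)^α) x := by
    have := hx1.rpow_const (p := α+1) (Or.inl hbase.ne')
    simpa [show α+1-1 = α by ring] using this
  have h2 : HasDerivAt (fun x : ℝ => (1+x)^α) (α*(1+x)^(α-1)) x := by
    simpa using hx1.rpow_const (p := α) (Or.inl hbase.ne')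
  have h3 : HasDerivAt (fun x : ℝ => x*((1+x)^α + 1))
      (1*((1+x)^α + 1) + x*(α*(1+x)^(α-1))) x :=
    (hasDerivAt_id x).mul (h2.add_const 1)
  have h4 : HasDerivAt (fun x : ℝ => x^3) (3*x^2) x := by
    simpa using hasDerivAt_pow 3 x
  have h : HasDerivAt (Afun α)
      (((α+1)*(1+x)^α)/Real.Gamma (α+2)
        - (1*((1+x)^α + 1) + x*(α*(1+x)^(α-1)))/(2*Real.Gamma (α+1))
        - (1-α)/(12*Real.Gamma α) * (3*x^2)) x := by
    unfold Afun
    exact (((h1.sub_const 1).div_const _).sub (h3.div_const _)).sub (h4.const_mul _)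
  convert h using 1
  have hg : 0 < Real.Gamma α := Real.Gamma_pos_of_pos hα0
  unfold A1fun
  rw [gam2 hα0, gam1 hα0]
  field_simp
  ring

lemma hasDerivA1 {α : ℝ} (hα0 : 0 < α) :
    ∀ x, 0 ≤ x → HasDerivAt (A1fun α) (A2fun α x) x := by
  intro x hx
  have hbase : (0:ℝ) < 1 + x := by linarith
  have hx1 : HasDerivAt (fun x : ℝ => 1 + x) 1 x := (hasDerivAt_id x).const_add 1
  have h2 : HasDerivAt (fun x : ℝ => (1+x)^α) (α*(1+x)^(α-1)) x := by
    simpa using hx1.rpow_const (p := α) (Or.inl hbase.ne')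
  have h5 : HasDerivAt (fun x : ℝ => (1+x)^(α-1)) ((α-1)*(1+x)^(α-2)) x := by
    have := hx1.rpow_const (p := α-1) (Or.inl hbase.ne')
    simpa [show α-1-1 = α-2 by ring] using this
  have h6 : HasDerivAt (fun x : ℝ => α*x*(1+x)^(α-1))
      ((α*1)*(1+x)^(α-1) + (α*x)*((α-1)*(1+x)^(α-2))) x :=
    ((hasDerivAt_id x).const_mul α).mul h5
  have h7 : HasDerivAt (fun x : ℝ => x^2) (2*x) x := by
    simpa using hasDerivAt_pow 2 x
  have h : HasDerivAt (A1fun α)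
      ((α*(1+x)^(α-1) - ((α*1)*(1+x)^(α-1) + (α*x)*((α-1)*(1+x)^(α-2))))/(2*Real.Gamma (α+1))
        - 3*((1-α)/(12*Real.Gamma α))*(2*x)) x := by
    unfold A1fun
    exact (((h2.sub_const 1).sub h6).div_const _).sub (h7.const_mul _)
  convert h using 1
  have hg : 0 < Real.Gamma α := Real.Gamma_pos_of_pos hα0
  unfold A2fun
  rw [gam1 hα0]
  field_simp
  ring

lemma boundA2 {α : ℝ} (hα0 : 0 < α) (hα1 : α < 1) :
    ∀ t, 0 ≤ t → |A2fun α t| ≤ ((1-α)/(2*Real.Gamma α)*(2-α)) * t^2 := by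
  intro t ht
  have hg : 0 < Real.Gamma α := Real.Gamma_pos_of_pos hα0
  have hinner : |(1+t)^(α-2) - 1| ≤ (2-α) * t := by
    have := poly_bound (fun s => (1+s)^(α-2) - 1) (fun s => (α-2)*(1+s)^(α-3)) (2-α) 0
      (fun s hs => by
        have hbase : (0:ℝ) < 1 + s := by linarith
        have h := (((hasDerivAt_id s).const_add 1).rpow_const (p := α-2)
          (Or.inl hbase.ne')).sub_const 1
        simpa [show α-2-1 = α-3 by ring] using h)
      (fun s hs => by
        have hbase : (1:ℝ) ≤ 1 + s := by linarith
        have h1 : (1+s)^(α-3) ≤ 1 := Real.rpow_le_one_of_one_le_of_nonpos hbase (by linarith)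
        have h2 : (0:ℝ) ≤ (1+s)^(α-3) := (Real.rpow_pos_of_pos (by linarith) _).le
        rw [abs_mul, abs_of_nonpos (by linarith : α-2 ≤ 0), abs_of_nonneg h2]
        simp only [pow_zero, mul_one]
        nlinarith)
      (by simp) t ht
    simpa using this
  unfold A2fun
  rw [abs_mul, abs_mul]
  rw [abs_of_nonneg (div_nonneg (by linarith) (by linarith) : (0:ℝ) ≤ (1-α)/(2*Real.Gamma α)), abs_of_nonneg ht]
  have hk : (0:ℝ) ≤ (1-α)/(2*Real.Gamma α) := div_nonneg (by linarith) (by linarith)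
  calc (1-α)/(2*Real.Gamma α) * (t * |(1+t)^(α-2) - 1|)
      ≤ (1-α)/(2*Real.Gamma α) * (t * ((2-α)*t)) := by
        apply mul_le_mul_of_nonneg_left (mul_le_mul_of_nonneg_left hinner ht) hk
    _ = (1-α)/(2*Real.Gamma α)*(2-α) * t^2 := by ring

lemma boundA1 {α : ℝ} (hα0 : 0 < α) (hα1 : α < 1) :
    ∀ x, 0 ≤ x → |A1fun α x| ≤ ((1-α)/(2*Real.Gamma α)*(2-α)) * x^2 * x := by
  apply poly_bound (A1fun α) (A2fun α) _ 2 (hasDerivA1 hα0) (boundA2 hα0 hα1)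
  simp [A1fun]

lemma boundA {α : ℝ} (hα0 : 0 < α) (hα1 : α < 1) :
    ∀ x, 0 ≤ x → |Afun α x| ≤ ((1-α)/(2*Real.Gamma α)*(2-α)) * x^3 * x := by
  apply poly_bound (Afun α) (A1fun α) _ 3 (hasDerivA hα0)
    (fun t ht => by
      calc |A1fun α t| ≤ ((1-α)/(2*Real.Gamma α)*(2-α)) * t^2 * t := boundA1 hα0 hα1 t ht
      _ = ((1-α)/(2*Real.Gamma α)*(2-α)) * t^3 := by ring)
  simp [Afun]
theorem stmt_2 (α : ℝ) (hα0 : 0 < α) (hα1 : α < 1) :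
    (∃ C > (0 : ℝ), ∀ n : ℕ, 1 ≤ n →
      |tauW α n - (1 - α) / (12 * Real.Gamma α) * (n : ℝ) ^ (α - 2)|
        ≤ C * (n : ℝ) ^ (α - 3)) ∧
    Summable (fun n : ℕ => |tauW α n|) := by
  have hg : 0 < Real.Gamma α := Real.Gamma_pos_of_pos hα0
  set K : ℝ := (1-α)/(2*Real.Gamma α)*(2-α) with hK
  set c : ℝ := (1-α)/(12*Real.Gamma α) with hc
  have hKpos : 0 < K := by
    apply mul_pos (div_pos (by linarith) (by linarith)) (by linarith)
  have hcpos : 0 < c := div_pos (by linarith) (by linarith)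
  have main : ∀ n : ℕ, 1 ≤ n →
      |tauW α n - c * (n : ℝ) ^ (α - 2)| ≤ K * (n : ℝ) ^ (α - 3) := by
    intro n hn
    set a : ℝ := (n : ℝ) with ha
    have ha1 : (1:ℝ) ≤ a := by rw [ha]; exact_mod_cast hn
    have ha0 : (0:ℝ) < a := by linarith
    have hane : a ≠ 0 := ha0.ne'
    have ha1pos : (0:ℝ) < a + 1 := by linarith
    have hxnn : (0:ℝ) ≤ 1/a := by positivity
    -- the key identity
    have hplus : (1 + 1/a : ℝ) = (a+1)/a := by field_simp
    have hdiv1 : ((a+1)/a)^(α+1) = (a+1)^(α+1)/a^(α+1) := Real.div_rpow ha1pos.le ha0.le _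
    have hdiv2 : ((a+1)/a)^α = (a+1)^α/a^α := Real.div_rpow ha1pos.le ha0.le _
    have hP : (a+1)^(α+1) = (a+1)^α*(a+1) := Real.rpow_add_one ha1pos.ne' α
    have hQ : a^(α+1) = a^α*a := Real.rpow_add_one hane α
    have hR : a^(α-2) = a^α/a^2 := by
      rw [show (α-2) = α - ((2:ℕ):ℝ) by push_cast; ring, Real.rpow_sub ha0,
        Real.rpow_natCast]
    have hapow : (0:ℝ) < a^α := Real.rpow_pos_of_pos ha0 _
    have ident : tauW α n - c * a ^ (α-2) = a^(α+1) * Afun α (1/a) := by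
      unfold tauW Afun
      rw [← ha, hplus, hdiv1, hdiv2, hP, hQ, hR, gam2 hα0, gam1 hα0, hc]
      field_simp
    have hAb := boundA hα0 hα1 (1/a) hxnn
    have hpow1 : (0:ℝ) < a^(α+1) := Real.rpow_pos_of_pos ha0 _
    have hR2 : a^(α-3) = a^(α+1)/a^4 := by
      rw [show (α-3) = (α+1) - ((4:ℕ):ℝ) by push_cast; ring, Real.rpow_sub ha0,
        Real.rpow_natCast]
    calc |tauW α n - c * a ^ (α-2)| = a^(α+1) * |Afun α (1/a)| := by
          rw [ident, abs_mul, abs_of_nonneg hpow1.le]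
      _ ≤ a^(α+1) * (K * (1/a)^3 * (1/a)) := mul_le_mul_of_nonneg_left hAb hpow1.le
      _ = K * a^(α-3) := by rw [hR2]; field_simp
  constructor
  · exact ⟨K, hKpos, main⟩
  · rw [← summable_nat_add_iff 1]
    have hsum0 : Summable (fun n : ℕ => (n:ℝ)^(α-2)) :=
      Real.summable_nat_rpow.mpr (by linarith)
    have hsum1 : Summable (fun n : ℕ => (K + c) * (((n+1:ℕ)):ℝ)^(α-2)) :=
      (((summable_nat_add_iff 1).mpr hsum0)).mul_left _
    apply Summable.of_nonneg_of_le (fun n => abs_nonneg _) _ hsum1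
    intro n
    have hn1 : 1 ≤ n + 1 := Nat.le_add_left 1 n
    set b : ℝ := ((n+1:ℕ):ℝ) with hb
    have hb1 : (1:ℝ) ≤ b := by rw [hb]; exact_mod_cast hn1
    have hb0 : (0:ℝ) < b := by linarith
    have h1 := main (n+1) hn1
    have h2 : b^(α-3) ≤ b^(α-2) := Real.rpow_le_rpow_of_exponent_le hb1 (by linarith)
    have h3 : (0:ℝ) < b^(α-2) := Real.rpow_pos_of_pos hb0 _
    have h4 : |tauW α (n+1)| ≤ |tauW α (n+1) - c * b^(α-2)| + c * b^(α-2) := by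
      have := abs_sub_abs_le_abs_sub (tauW α (n+1)) (c * b^(α-2))
      have habs : |c * b^(α-2)| = c * b^(α-2) := abs_of_nonneg (by positivity)
      calc |tauW α (n+1)| = |tauW α (n+1) - c * b^(α-2) + c * b^(α-2)| := by ring_nf
        _ ≤ |tauW α (n+1) - c * b^(α-2)| + |c * b^(α-2)| := abs_add_le _ _
        _ = |tauW α (n+1) - c * b^(α-2)| + c * b^(α-2) := by rw [habs]
    calc |tauW α (n+1)| ≤ K * b^(α-3) + c * b^(α-2) := by
          have := h1
          linarith [h4, h1]
      _ ≤ K * b^(α-2) + c * b^(α-2) := by nlinarith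
      _ = (K + c) * b^(α-2) := by ring
end

section
/- Let 0<α<1 and let (ω_n^{−1})_{n≥0} be the coefficients of the multiplicative inverse of the formal power series ω(ξ) = Σ_{n≥0} ω_n ξ^n. Then ω_0^{−1} > 0, ω_n^{−1} < 0 for every n ≥ 1, and ω_0^{−1} = Γ(α+1) = Σ_{n=1}^∞ |ω_n^{−1}|. -/
open Real

/-- Coefficients `ω_n^{−1}` of the multiplicative inverse of the formal power
series `ω(ξ) = Σ_{n≥0} ω_n ξ^n`. -/
noncomputable def omegaInv (α : ℝ) (n : ℕ) : ℝ :=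
  PowerSeries.coeff n (PowerSeries.mk (omegaW α))⁻¹

open Finset PowerSeries MeasureTheory Filter Topology

/-!
The weights `ω_n = α/Γ(α+1) ∫₀¹ (n+s)^(α-1) ds` are positive and, as a mixture of the log-convex
sequences `n ↦ (n+s)^(α-1)`, log-convex; log-convexity is strict at `n = 0`. Kaluza's argument then
makes every `ω_n^{-1}` with `n ≥ 1` negative.

The partial sums `V_N = ∑_{i ≤ N} ω_i^{-1}` are the coefficients of `((1-ξ) ω(ξ))⁻¹`. As `ω_n` is
decreasing, `(1-ξ) ω(ξ)` has a positive constant term and nonpositive other coefficients, so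
`V_N ≥ 0`. Comparing coefficients in `ω(ξ) · ∑ V_N ξ^N = 1/(1-ξ)` and using that `V` is decreasing
gives `V_N ∑_{k ≤ N} ω_k = V_N (N+1)^α / Γ(α+1) ≤ 1`. Hence `V_N → 0`, that is,
`∑_{n ≥ 1} |ω_n^{-1}| = ω_0^{-1} = Γ(α+1)`.
-/

theorem MeasureTheory.sq_integral_le_integral_mul_integral {X : Type*} [MeasurableSpace X]
    {μ : Measure X} {f g h : X → ℝ} (hf : Integrable f μ) (hg : Integrable g μ)
    (hh : Integrable h μ) (hf₀ : ∀ᵐ x ∂μ, 0 ≤ f x) (hh₀ : ∀ᵐ x ∂μ, 0 ≤ h x)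
    (hgfh : ∀ᵐ x ∂μ, g x ^ 2 ≤ f x * h x) :
    (∫ x, g x ∂μ) ^ 2 ≤ (∫ x, f x ∂μ) * ∫ x, h x ∂μ := by
  set F := ∫ x, f x ∂μ
  set G := ∫ x, g x ∂μ
  set H := ∫ x, h x ∂μ
  -- integrate `2 g(x) g(y) ≤ f(x) h(y) + h(x) f(y)` (AM-GM) over `y`, then over `x`
  have hinner : ∀ᵐ x ∂μ, 0 ≤ f x * H + h x * F - 2 * (g x * G) := by
    filter_upwards [hf₀, hh₀, hgfh] with x hfx hhx hx
    have hpt : ∀ᵐ y ∂μ, 0 ≤ f x * h y + h x * f y - 2 * (g x * g y) := by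
      filter_upwards [hf₀, hh₀, hgfh] with y hfy hhy hy
      have hprod : (g x * g y) ^ 2 ≤ (f x * h y) * (h x * f y) := by
        nlinarith [mul_le_mul hx hy (sq_nonneg _) (mul_nonneg hfx hhx)]
      nlinarith [mul_nonneg hfx hhy, mul_nonneg hhx hfy, sq_nonneg (f x * h y - h x * f y)]
    have := integral_nonneg_of_ae hpt
    rwa [integral_sub, integral_add, integral_const_mul, integral_const_mul, integral_const_mul,
      integral_const_mul] at this
    exacts [hh.const_mul _, hf.const_mul _, (hh.const_mul _).add (hf.const_mul _),
      (hg.const_mul _).const_mul _]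
  have := integral_nonneg_of_ae hinner
  rw [integral_sub, integral_add, integral_mul_const, integral_mul_const, integral_const_mul,
    integral_mul_const] at this
  · nlinarith
  exacts [hf.mul_const _, hh.mul_const _, (hf.mul_const _).add (hh.mul_const _),
    (hg.mul_const _).const_mul _]

theorem Real.sq_rpow_add_one_le {r y : ℝ} (hr : r ≤ 0) (hy : 0 < y) :
    ((y + 1) ^ r) ^ 2 ≤ y ^ r * (y + 2) ^ r := by
  rw [rpow_pow_comm (by linarith), ← mul_rpow hy.le (by linarith)]
  exact rpow_le_rpow_of_nonpos (by positivity) (by nlinarith) hr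

theorem Real.integrableOn_Ioc_rpow_add {r : ℝ} (hr : -1 < r) (x k : ℝ) :
    IntegrableOn (fun y => (y + k) ^ r) (Set.Ioc x (x + 1)) := by
  simpa using ((intervalIntegral.intervalIntegrable_rpow' hr (a := x + k)
    (b := x + 1 + k)).comp_add_right k).1

theorem Real.integral_Ioc_rpow_add {r : ℝ} (hr : -1 < r) (x k : ℝ) :
    ∫ y in Set.Ioc x (x + 1), (y + k) ^ r =
      ((x + k + 1) ^ (r + 1) - (x + k) ^ (r + 1)) / (r + 1) := by
  rw [← intervalIntegral.integral_of_le (by linarith),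
    intervalIntegral.integral_comp_add_right (fun y => y ^ r), integral_rpow (Or.inl hr),
    add_right_comm]

theorem Real.rpow_add_two_sub_sq_le {α x : ℝ} (hα₀ : 0 < α) (hα₁ : α ≤ 1) (hx : 0 ≤ x) :
    ((x + 2) ^ α - (x + 1) ^ α) ^ 2 ≤ ((x + 1) ^ α - x ^ α) * ((x + 3) ^ α - (x + 2) ^ α) := by
  have hr : -1 < α - 1 := by linarith
  have hIoc : ∀ᵐ y ∂volume.restrict (Set.Ioc x (x + 1)), 0 < y := by
    filter_upwards [ae_restrict_mem measurableSet_Ioc] with y hy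
    linarith [hy.1]
  have key := sq_integral_le_integral_mul_integral (integrableOn_Ioc_rpow_add hr x 0)
    (integrableOn_Ioc_rpow_add hr x 1) (integrableOn_Ioc_rpow_add hr x 2)
    (hIoc.mono fun y hy => rpow_nonneg (by linarith) _)
    (hIoc.mono fun y hy => rpow_nonneg (by linarith) _)
    (hIoc.mono fun y hy => by
      simpa [add_assoc, one_add_one_eq_two] using sq_rpow_add_one_le (by linarith) hy)
  simp only [integral_Ioc_rpow_add hr, sub_add_cancel, div_pow, div_mul_div_comm, ← sq] at key
  rw [div_le_div_iff_of_pos_right (by positivity)] at key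
  norm_num [add_assoc] at key
  exact key

theorem Real.two_rpow_sub_one_sq_lt {α : ℝ} (hα₀ : 0 < α) (hα₁ : α < 1) :
    (2 ^ α - 1) ^ 2 < (3 : ℝ) ^ α - 2 ^ α := by
  have hc := strictConcaveOn_rpow hα₀ hα₁
  have h₁ := hc.slope_anti_adjacent (x := 1) (y := 2) (z := 3) (by norm_num) (by norm_num)
    (by norm_num) (by norm_num)
  have h₂ := hc.slope_anti_adjacent (x := 2) (y := 3) (z := 4) (by norm_num) (by norm_num)
    (by norm_num) (by norm_num)
  have h₄ : (4 : ℝ) ^ α = (2 ^ α) ^ 2 := by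
    rw [rpow_pow_comm zero_le_two]
    norm_num
  norm_num [h₄] at h₁ h₂
  nlinarith

section

variable {𝕜 : Type*} [Field 𝕜] [LinearOrder 𝕜] [IsStrictOrderedRing 𝕜]

theorem monotone_succ_div_of_sq_le_mul {a : ℕ → 𝕜} (ha : ∀ n, 0 < a n)
    (h : ∀ n, a (n + 1) ^ 2 ≤ a n * a (n + 2)) : Monotone fun n => a (n + 1) / a n :=
  monotone_nat_of_le_succ fun n => by
    rw [div_le_div_iff₀ (ha n) (ha (n + 1)), ← sq, mul_comm]
    exact h n

namespace PowerSeries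

theorem coeff_inv_nonneg {φ : 𝕜⟦X⟧} (hφ₀ : 0 < constantCoeff φ)
    (hφ : ∀ n, coeff (n + 1) φ ≤ 0) (n : ℕ) : 0 ≤ coeff n φ⁻¹ := by
  induction n using Nat.strong_induction_on with
  | _ n ih =>
  rw [coeff_inv]
  split_ifs with hn
  · exact (inv_pos.2 hφ₀).le
  refine mul_nonneg_of_nonpos_of_nonpos (neg_nonpos.2 (inv_pos.2 hφ₀).le)
    (sum_nonpos fun p hp => ?_)
  split_ifs with hp₂
  · obtain ⟨i, hi⟩ : ∃ i, p.1 = i + 1 :=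
      Nat.exists_eq_succ_of_ne_zero (by rw [HasAntidiagonal.mem_antidiagonal] at hp; omega)
    rw [hi]
    exact mul_nonpos_of_nonpos_of_nonneg (hφ i) (ih _ hp₂)
  · rfl

theorem coeff_mul_mk_one {R : Type*} [Semiring R] (φ : R⟦X⟧) (n : ℕ) :
    coeff n (φ * mk 1) = ∑ i ∈ range (n + 1), coeff i φ := by
  simp [coeff_mul, Nat.sum_antidiagonal_eq_sum_range_succ_mk]

theorem sum_coeff_inv_nonneg_of_antitone {φ : 𝕜⟦X⟧} (hφ₀ : 0 < constantCoeff φ)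
    (hφ : Antitone fun n => coeff n φ) (n : ℕ) : 0 ≤ ∑ i ∈ range (n + 1), coeff i φ⁻¹ := by
  have hX : constantCoeff (1 - X : 𝕜⟦X⟧) ≠ 0 := by simp
  have hinv : ((1 - X) * φ)⁻¹ = φ⁻¹ * mk 1 := by
    rw [PowerSeries.mul_inv_rev, (inv_eq_iff_mul_eq_one hX).2 (mk_one_mul_one_sub_eq_one 𝕜)]
  rw [← coeff_mul_mk_one, ← hinv]
  refine coeff_inv_nonneg (by simpa using hφ₀) (fun n => ?_) n
  have := hφ n.le_succ
  simp only [sub_mul, one_mul, map_sub, coeff_succ_X_mul]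
  linarith

theorem sum_coeff_inv_mul_sum_coeff_le_one {φ : 𝕜⟦X⟧} (hφ₀ : constantCoeff φ ≠ 0)
    (hφ : ∀ n, 0 ≤ coeff n φ) (hφinv : ∀ n, coeff (n + 1) φ⁻¹ ≤ 0) (n : ℕ) :
    (∑ i ∈ range (n + 1), coeff i φ⁻¹) * ∑ k ∈ range (n + 1), coeff k φ ≤ 1 := by
  set V := fun m => ∑ i ∈ range (m + 1), coeff i φ⁻¹
  have hV : Antitone V := antitone_nat_of_succ_le fun m => by
    simpa [V, sum_range_succ _ (m + 1)] using hφinv m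
  have hone : coeff n (φ * (φ⁻¹ * mk 1)) = 1 := by
    rw [← mul_assoc, PowerSeries.mul_inv_cancel φ hφ₀, one_mul, coeff_mk, Pi.one_apply]
  calc V n * ∑ k ∈ range (n + 1), coeff k φ
      = ∑ k ∈ range (n + 1), coeff k φ * V n := by rw [mul_sum]; simp only [mul_comm]
    _ ≤ ∑ k ∈ range (n + 1), coeff k φ * V (n - k) :=
        sum_le_sum fun k _ => mul_le_mul_of_nonneg_left (hV (Nat.sub_le n k)) (hφ k)
    _ = 1 := by
        rw [← hone, coeff_mul, Nat.sum_antidiagonal_eq_sum_range_succ_mk]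
        simp only [V, coeff_mul_mk_one]

theorem coeff_inv_neg_of_sq_le_mul {φ : 𝕜⟦X⟧} (hφ : ∀ n, 0 < coeff n φ)
    (hlog : ∀ n, coeff (n + 1) φ ^ 2 ≤ coeff n φ * coeff (n + 2) φ)
    (hlog₀ : coeff 1 φ ^ 2 < coeff 0 φ * coeff 2 φ) (n : ℕ) : coeff (n + 1) φ⁻¹ < 0 := by
  set a := fun n => coeff n φ
  set b := fun n => coeff n φ⁻¹
  have hφ₀ : constantCoeff φ ≠ 0 := by simpa using (hφ 0).ne'
  have hconv : ∀ n, ∑ p ∈ antidiagonal (n + 1), a p.1 * b p.2 = 0 := fun n => by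
    rw [← coeff_mul, PowerSeries.mul_inv_cancel φ hφ₀, coeff_one, if_neg n.succ_ne_zero]
  have hb₀ : 0 < b 0 := by simpa [b] using hφ 0
  have hr := monotone_succ_div_of_sq_le_mul hφ hlog
  have hcross : ∀ {i m}, i ≤ m → a (i + 1) * a m ≤ a (m + 1) * a i := fun him => by
    rw [← div_le_div_iff₀ (hφ _) (hφ _)]
    exact hr him
  induction n using Nat.strong_induction_on with
  | _ n ih =>
  rcases n with _ | m
  · have h := hconv 0
    simp only [Nat.sum_antidiagonal_succ, Nat.antidiagonal_zero, sum_singleton] at h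
    nlinarith [mul_pos (hφ 1) hb₀, hφ 0]
  -- Kaluza's trick: in `a (m + 1) (φ φ⁻¹)ₘ₊₂ - a (m + 2) (φ φ⁻¹)ₘ₊₁ = 0` log-convexity gives
  -- every term except the one containing `b (m + 2)` the same sign.
  have hkey : a (m + 1) * a 0 * b (m + 2) =
      -∑ p ∈ antidiagonal (m + 1), (a (m + 1) * a (p.1 + 1) - a (m + 2) * a p.1) * b p.2 := by
    have h₂ := hconv (m + 1)
    rw [Nat.sum_antidiagonal_succ] at h₂
    simp only [sub_mul, sum_sub_distrib, mul_assoc, ← mul_sum, hconv m]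
    linear_combination a (m + 1) * h₂
  have hterm : ∀ p ∈ antidiagonal (m + 1),
      0 ≤ (a (m + 1) * a (p.1 + 1) - a (m + 2) * a p.1) * b p.2 := by
    rintro ⟨i, _ | j⟩ hp
    · rw [HasAntidiagonal.mem_antidiagonal, add_zero] at hp
      subst hp
      simp [mul_comm]
    · rw [HasAntidiagonal.mem_antidiagonal] at hp
      refine mul_nonneg_of_nonpos_of_nonpos ?_ (ih j (by omega)).le
      linarith [hcross (show i ≤ m + 1 by omega)]
  have hterm₀ : 0 < (a (m + 1) * a 1 - a (m + 2) * a 0) * b (m + 1) := by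
    refine mul_pos_of_neg_of_neg ?_ (ih m m.lt_succ_self)
    have h₁ : a 1 / a 0 < a 2 / a 1 := by
      rw [div_lt_div_iff₀ (hφ 0) (hφ 1), ← sq, mul_comm]
      exact hlog₀
    have h₂ : a 1 / a 0 < a (m + 2) / a (m + 1) := h₁.trans_le (hr (Nat.le_add_left 1 m))
    rw [div_lt_div_iff₀ (hφ 0) (hφ _)] at h₂
    linarith
  have hsum := sum_pos' hterm ⟨(0, m + 1), by simp, hterm₀⟩
  have : a (m + 1) * a 0 * b (m + 2) < 0 := by linarith
  exact neg_of_mul_neg_right this (mul_pos (hφ _) (hφ 0)).le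

end PowerSeries

end

section
variable {α : ℝ}

theorem omegaW_pos (hα : 0 < α) (n : ℕ) : 0 < omegaW α n :=
  div_pos (sub_pos.2 (rpow_lt_rpow (by positivity) (lt_add_one _) hα))
    (Gamma_pos_of_pos (by linarith))

theorem omegaW_zero (hα : 0 < α) : omegaW α 0 = (Gamma (α + 1))⁻¹ := by
  simp [omegaW, zero_rpow hα.ne']

theorem omegaW_succ_le (hα₀ : 0 ≤ α) (hα₁ : α ≤ 1) (n : ℕ) : omegaW α (n + 1) ≤ omegaW α n := by
  have := (concaveOn_rpow hα₀ hα₁).slope_anti_adjacent (x := n) (y := n + 1) (z := n + 2)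
    (by simp) (by simp; positivity) (by linarith) (by linarith)
  refine div_le_div_of_nonneg_right ?_ (Gamma_pos_of_pos (by linarith)).le
  push_cast
  norm_num [add_assoc] at this ⊢
  linarith

theorem omegaW_sq_le (hα₀ : 0 < α) (hα₁ : α ≤ 1) (n : ℕ) :
    omegaW α (n + 1) ^ 2 ≤ omegaW α n * omegaW α (n + 2) := by
  unfold omegaW
  rw [div_pow, div_mul_div_comm, ← sq]
  gcongr
  push_cast
  norm_num [add_assoc]
  exact rpow_add_two_sub_sq_le hα₀ hα₁ n.cast_nonneg

theorem omegaW_one_sq_lt (hα₀ : 0 < α) (hα₁ : α < 1) :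
    omegaW α 1 ^ 2 < omegaW α 0 * omegaW α 2 := by
  unfold omegaW
  rw [div_pow, div_mul_div_comm, ← sq]
  gcongr
  norm_num [zero_rpow hα₀.ne']
  exact two_rpow_sub_one_sq_lt hα₀ hα₁

theorem sum_range_omegaW (hα : 0 < α) (N : ℕ) :
    ∑ k ∈ range N, omegaW α k = (N : ℝ) ^ α / Gamma (α + 1) := by
  have := sum_range_sub (fun k : ℕ => (k : ℝ) ^ α) N
  push_cast at this
  simp [omegaW, ← sum_div, this, zero_rpow hα.ne']

theorem omegaInv_zero (hα : 0 < α) : omegaInv α 0 = Gamma (α + 1) := by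
  simp [omegaInv, omegaW_zero hα]

theorem omegaInv_succ_neg (hα₀ : 0 < α) (hα₁ : α < 1) (n : ℕ) : omegaInv α (n + 1) < 0 :=
  coeff_inv_neg_of_sq_le_mul (by simpa using omegaW_pos hα₀)
    (by simpa using omegaW_sq_le hα₀ hα₁.le) (by simpa using omegaW_one_sq_lt hα₀ hα₁) n

theorem sum_omegaInv_nonneg (hα₀ : 0 < α) (hα₁ : α ≤ 1) (N : ℕ) :
    0 ≤ ∑ i ∈ range (N + 1), omegaInv α i :=
  sum_coeff_inv_nonneg_of_antitone (by simpa using omegaW_pos hα₀ 0)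
    (antitone_nat_of_succ_le (by simpa using omegaW_succ_le hα₀.le hα₁)) N

theorem sum_omegaInv_le (hα₀ : 0 < α) (hα₁ : α < 1) (N : ℕ) :
    ∑ i ∈ range (N + 1), omegaInv α i ≤ Gamma (α + 1) / ((N : ℝ) + 1) ^ α := by
  have := sum_coeff_inv_mul_sum_coeff_le_one (φ := mk (omegaW α))
    (by simpa using (omegaW_pos hα₀ 0).ne') (by simpa using fun n => (omegaW_pos hα₀ n).le)
    (omegaInv_succ_neg hα₀ hα₁ · |>.le) N
  simp only [coeff_mk, sum_range_omegaW hα₀] at this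
  push_cast at this
  rw [le_div_iff₀ (by positivity)]
  rwa [mul_div_assoc', div_le_one (Gamma_pos_of_pos (by linarith))] at this

theorem tendsto_sum_omegaInv (hα₀ : 0 < α) (hα₁ : α < 1) :
    Tendsto (fun N => ∑ i ∈ range (N + 1), omegaInv α i) atTop (𝓝 0) :=
  squeeze_zero (sum_omegaInv_nonneg hα₀ hα₁.le) (sum_omegaInv_le hα₀ hα₁)
    (tendsto_const_nhds.div_atTop ((tendsto_rpow_atTop hα₀).comp
      (tendsto_atTop_add_const_right _ 1 tendsto_natCast_atTop_atTop)))

end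

theorem stmt_3 (α : ℝ) (hα0 : 0 < α) (hα1 : α < 1) :
    0 < omegaInv α 0 ∧
    (∀ n : ℕ, 1 ≤ n → omegaInv α n < 0) ∧
    omegaInv α 0 = Real.Gamma (α + 1) ∧
    HasSum (fun n : ℕ => |omegaInv α (n + 1)|) (Real.Gamma (α + 1)) := by
  have hΓ : 0 < Gamma (α + 1) := Gamma_pos_of_pos (by linarith)
  refine ⟨omegaInv_zero hα0 ▸ hΓ, fun n hn => ?_, omegaInv_zero hα0, ?_⟩
  · obtain ⟨m, rfl⟩ := Nat.exists_eq_add_of_le' hn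
    exact omegaInv_succ_neg hα0 hα1 m
  rw [hasSum_iff_tendsto_nat_of_nonneg (fun n => abs_nonneg _)]
  have hpartial : ∀ N, ∑ n ∈ range N, |omegaInv α (n + 1)| =
      Gamma (α + 1) - ∑ i ∈ range (N + 1), omegaInv α i := fun N => by
    rw [sum_range_succ', omegaInv_zero hα0, sum_congr rfl fun n _ =>
      abs_of_neg (omegaInv_succ_neg hα0 hα1 n), sum_neg_distrib]
    ring
  simp_rw [hpartial]
  simpa using (tendsto_sum_omegaInv hα0 hα1).const_sub (Gamma (α + 1))
end

section
/- Let 0<α<1 and a>0, and let k:[0,a]×[0,a]→ℝ be continuous with k(x,x)=1 for all x. For h = a/N consider the 2×2 matrix S_h with entries (S_h)_{n,j} = (ω_{n−j} + w_{n,j})·k(x_n, x_{j−1/2}) for n, j ∈ {1,2}, where ω_{−1} := 0. Then there exist h₀ > 0 and M > 0 such that for all 0 < h ≤ h₀ the matrix S_h is invertible and the maximum-norm operator norm of S_h^{−1} is at most M. -/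
open Real

/-- Correction weights `w_{n,1} = −Σ_{l<n} τ_l`, `w_{n,2} = Σ_{l<n} τ_l`. -/
noncomputable def corrW (α : ℝ) (n j : ℕ) : ℝ :=
  if j = 1 then -(∑ l ∈ Finset.range n, tauW α l) else ∑ l ∈ Finset.range n, tauW α l

/-- The 2×2 starting matrix `S_h` with entries
`(S_h)_{n,j} = (ω_{n−j} + w_{n,j})·k(x_n, x_{j−1/2})` for `n, j ∈ {1,2}` (`ω_{−1} := 0`);
row index `i` corresponds to `n = i+1`, column index `j` to `j+1`. -/
noncomputable def Smat (α : ℝ) (k : ℝ → ℝ → ℝ) (h : ℝ) : Matrix (Fin 2) (Fin 2) ℝ :=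
  fun i j =>
    ((if (j : ℕ) ≤ (i : ℕ) then omegaW α ((i : ℕ) - (j : ℕ)) else 0)
        + corrW α ((i : ℕ) + 1) ((j : ℕ) + 1))
      * k (((i : ℕ) + 1 : ℝ) * h) (((j : ℕ) + 1 : ℝ) * h - h / 2)

/-!
As `h → 0⁺`, every kernel value `k(x_n, x_{j-1/2})` tends to `k(0,0) = 1`, so `S_h` tends to the
constant matrix of quadrature coefficients `C`, whose determinant is `2^α / ((α+1) Γ(α+1)²) > 0`.
Since matrix inversion is continuous at invertible matrices, `S_h` is invertible for small `h`
and `S_h⁻¹ → C⁻¹`, so the row-sum norm of `S_h⁻¹` stays bounded.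
-/

open Real Filter Topology Set

noncomputable def coeffMat (α : ℝ) : Matrix (Fin 2) (Fin 2) ℝ :=
  fun i j =>
    (if (j : ℕ) ≤ (i : ℕ) then omegaW α ((i : ℕ) - (j : ℕ)) else 0)
      + corrW α ((i : ℕ) + 1) ((j : ℕ) + 1)

lemma Smat_apply (α : ℝ) (k : ℝ → ℝ → ℝ) (h : ℝ) (i j : Fin 2) :
    Smat α k h i j =
      coeffMat α i j * k (((i : ℕ) + 1 : ℝ) * h) (((j : ℕ) + 1 : ℝ) * h - h / 2) :=
  rfl

lemma det_coeffMat {α : ℝ} (hα : 0 < α) :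
    (coeffMat α).det = 2 ^ α / ((α + 1) * Gamma (α + 1) ^ 2) := by
  have hG : Gamma (α + 1) ≠ 0 := (Gamma_pos_of_pos (by linarith)).ne'
  have hG2 : Gamma (α + 2) = (α + 1) * Gamma (α + 1) := by
    rw [show α + 2 = (α + 1) + 1 by ring, Gamma_add_one (by linarith)]
  have h2 : (2 : ℝ) ^ (α + 1) = 2 ^ α * 2 := rpow_add_one two_ne_zero α
  have hentries : (coeffMat α).det = (omegaW α 0 - tauW α 0) * (omegaW α 0 + (tauW α 0 + tauW α 1))
      - tauW α 0 * (omegaW α 1 - (tauW α 0 + tauW α 1)) := by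
    simp only [Matrix.det_fin_two, coeffMat, corrW, Fin.isValue, Fin.val_zero, Fin.val_one,
      Finset.sum_range_succ, Finset.sum_range_zero, Nat.sub_self, Nat.sub_zero, le_refl, zero_le,
      nonpos_iff_eq_zero, one_ne_zero, if_true, if_false, Nat.reduceAdd, Nat.reduceEqDiff]
    ring
  rw [hentries]
  simp only [omegaW, tauW, hG2, Nat.cast_zero, Nat.cast_one, zero_add, one_add_one_eq_two,
    zero_rpow hα.ne', zero_rpow (by linarith : α + 1 ≠ 0), one_rpow, h2]
  field_simp
  ring

lemma Filter.Tendsto.eventually_isUnit_and_tendsto_inv {X 𝕜 n : Type*} [NormedField 𝕜]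
    [Fintype n] [DecidableEq n] {l : Filter X} {f : X → Matrix n n 𝕜} {A : Matrix n n 𝕜}
    (hf : Tendsto f l (𝓝 A)) (hA : A.det ≠ 0) :
    (∀ᶠ x in l, IsUnit (f x)) ∧ Tendsto (fun x => (f x)⁻¹) l (𝓝 A⁻¹) := by
  have hdet : Tendsto (fun x => (f x).det) l (𝓝 A.det) :=
    (continuous_id.matrix_det.tendsto A).comp hf
  refine ⟨(hdet.eventually_ne hA).mono fun x hx => ?_, ?_⟩
  · exact (Matrix.isUnit_iff_isUnit_det _).2 (isUnit_iff_ne_zero.2 hx)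
  · refine (continuousAt_matrix_inv A ?_).tendsto.comp hf
    rw [Ring.inverse_eq_inv']
    exact continuousAt_inv₀ hA

lemma tendsto_Smat_coeffMat (α : ℝ) {a : ℝ} (ha : 0 < a) {k : ℝ → ℝ → ℝ}
    (hk : ContinuousWithinAt (Function.uncurry k) (Icc 0 a ×ˢ Icc 0 a) (0, 0))
    (hk0 : k 0 0 = 1) :
    Tendsto (Smat α k) (𝓝[>] 0) (𝓝 (coeffMat α)) := by
  have hsmall : ∀ᶠ h in 𝓝[>] (0 : ℝ), h ∈ Ioo 0 (a / 2) := Ioo_mem_nhdsGT (half_pos ha)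
  refine tendsto_pi_nhds.2 fun i => tendsto_pi_nhds.2 fun j => ?_
  have hi : ((i : ℕ) : ℝ) ≤ 1 := by exact_mod_cast Nat.le_of_lt_succ i.isLt
  have hj : ((j : ℕ) : ℝ) ≤ 1 := by exact_mod_cast Nat.le_of_lt_succ j.isLt
  have hnode : Tendsto (fun h : ℝ => ((((i : ℕ) + 1 : ℝ) * h), (((j : ℕ) + 1 : ℝ) * h - h / 2)))
      (𝓝[>] 0) (𝓝[Icc 0 a ×ˢ Icc 0 a] (0, 0)) := by
    refine tendsto_nhdsWithin_iff.2 ⟨?_, hsmall.mono fun h ⟨hpos, hlt⟩ => ?_⟩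
    · exact tendsto_nhdsWithin_of_tendsto_nhds (Continuous.tendsto' (by fun_prop) _ _ (by simp))
    · refine ⟨⟨by positivity, by nlinarith⟩, ⟨by nlinarith, by nlinarith⟩⟩
  simpa only [Smat_apply, Function.comp_def, Function.uncurry_apply_pair, hk0, mul_one] using
    tendsto_const_nhds.mul (hk.tendsto.comp hnode)

theorem stmt_10_general (α a : ℝ) (hα0 : 0 < α) (ha : 0 < a)
    (k : ℝ → ℝ → ℝ)
    (hkc : ContinuousOn (Function.uncurry k) (Set.Icc (0 : ℝ) a ×ˢ Set.Icc (0 : ℝ) a))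
    (hk1 : ∀ x ∈ Set.Icc (0 : ℝ) a, k x x = 1) :
    ∃ h₀ > (0 : ℝ), ∃ M > (0 : ℝ), ∀ h : ℝ, 0 < h → h ≤ h₀ →
      IsUnit (Smat α k h) ∧
      max (|(Smat α k h)⁻¹ 0 0| + |(Smat α k h)⁻¹ 0 1|)
          (|(Smat α k h)⁻¹ 1 0| + |(Smat α k h)⁻¹ 1 1|) ≤ M := by
  have h0 : (0 : ℝ) ∈ Icc 0 a := ⟨le_rfl, ha.le⟩
  have hdet : (coeffMat α).det ≠ 0 := by rw [det_coeffMat hα0]; positivity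
  obtain ⟨hunit, hinv⟩ :=
    (tendsto_Smat_coeffMat α ha (hkc _ ⟨h0, h0⟩) (hk1 0 h0)).eventually_isUnit_and_tendsto_inv hdet
  let rowSumNorm : Matrix (Fin 2) (Fin 2) ℝ → ℝ := fun B =>
    max (|B 0 0| + |B 0 1|) (|B 1 0| + |B 1 1|)
  have hcont : Continuous rowSumNorm := by simp only [rowSumNorm]; fun_prop
  have hbound : ∀ᶠ h in 𝓝[>] 0, rowSumNorm (Smat α k h)⁻¹ ≤ rowSumNorm (coeffMat α)⁻¹ + 1 :=
    ((hcont.tendsto _).comp hinv).eventually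
      (eventually_le_nhds (lt_add_one _))
  obtain ⟨h₀, hh₀, hsub⟩ := mem_nhdsGT_iff_exists_Ioc_subset.1 (hunit.and hbound)
  exact ⟨h₀, hh₀, rowSumNorm (coeffMat α)⁻¹ + 1, by positivity,
    fun h hpos hle => hsub ⟨hpos, hle⟩⟩

theorem stmt_10 (α a : ℝ) (hα0 : 0 < α) (hα1 : α < 1) (ha : 0 < a)
    (k : ℝ → ℝ → ℝ)
    (hkc : ContinuousOn (Function.uncurry k) (Set.Icc (0 : ℝ) a ×ˢ Set.Icc (0 : ℝ) a))
    (hk1 : ∀ x ∈ Set.Icc (0 : ℝ) a, k x x = 1) :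
    ∃ h₀ > (0 : ℝ), ∃ M > (0 : ℝ), ∀ h : ℝ, 0 < h → h ≤ h₀ →
      IsUnit (Smat α k h) ∧
      max (|(Smat α k h)⁻¹ 0 0| + |(Smat α k h)⁻¹ 0 1|)
          (|(Smat α k h)⁻¹ 1 0| + |(Smat α k h)⁻¹ 1 1|) ≤ M :=
  stmt_10_general α a hα0 ha k hkc hk1
end

section
/- Let (σ_n)_{n≥0} be positive real weights satisfying σ_n ≤ c·σ_j whenever n/2 ≤ j ≤ n, for some finite constant c > 0. For complex sequences define ‖a‖ = sup_{m≥0} |a_m| σ_m + Σ_{n=0}^∞ |a_n|, and let ℓ∞_σ be the set of sequences a with ‖a‖ < ∞. Then for all a, b ∈ ℓ∞_σ, the convolution a*b defined by (a*b)_n = Σ_{j=0}^n a_{n−j} b_j belongs to ℓ∞_σ and satisfies ‖a*b‖ ≤ (2c+1)·‖a‖·‖b‖. -/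
open Real

/-- The weighted norm `‖a‖ = sup_{m≥0} |a_m| σ_m + Σ_{n=0}^∞ |a_n|`. -/
noncomputable def seqNorm (σ : ℕ → ℝ) (a : ℕ → ℂ) : ℝ :=
  (⨆ m : ℕ, ‖a m‖ * σ m) + ∑' n : ℕ, ‖a n‖

/-- Membership in the weighted space `ℓ∞_σ`: the norm `‖a‖` is finite. -/
def MemLinfSigma (σ : ℕ → ℝ) (a : ℕ → ℂ) : Prop :=
  Summable (fun n : ℕ => ‖a n‖) ∧
  BddAbove (Set.range fun m : ℕ => ‖a m‖ * σ m)

/-- Convolution of sequences, `(a*b)_n = Σ_{j=0}^n a_{n−j} b_j`. -/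
noncomputable def convSeq (a b : ℕ → ℂ) (n : ℕ) : ℂ :=
  ∑ j ∈ Finset.range (n + 1), a (n - j) * b j

/-!
In `(a*b)_n = Σ_{k+l=n} a_k b_l` one of the two indices is at least `n/2`, so `σ_n` is at most
`c` times the weight of that index. Bounding the corresponding factor by its weighted sup and the
other by its `ℓ¹` norm gives `|(a*b)_n| σ_n ≤ c (‖a‖_σ ‖b‖₁ + ‖b‖_σ ‖a‖₁)`, while
`‖a*b‖₁ ≤ ‖a‖₁ ‖b‖₁` is the Cauchy product estimate.
-/

open Finset

lemma convSeq_eq_sum_antidiagonal (a b : ℕ → ℂ) (n : ℕ) :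
    convSeq a b n = ∑ kl ∈ antidiagonal n, a kl.1 * b kl.2 := by
  rw [← Nat.sum_antidiagonal_swap, Nat.sum_antidiagonal_eq_sum_range_succ_mk]
  rfl

lemma norm_convSeq_le (a b : ℕ → ℂ) (n : ℕ) :
    ‖convSeq a b n‖ ≤ ∑ kl ∈ antidiagonal n, ‖a kl.1‖ * ‖b kl.2‖ := by
  rw [convSeq_eq_sum_antidiagonal]
  exact (norm_sum_le _ _).trans_eq (sum_congr rfl fun _ _ => norm_mul _ _)

section LOne

variable {a b : ℕ → ℂ} (ha : Summable fun n => ‖a n‖) (hb : Summable fun n => ‖b n‖)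
include ha hb

lemma summable_sum_norm_mul_antidiagonal :
    Summable fun n => ∑ kl ∈ antidiagonal n, ‖a kl.1‖ * ‖b kl.2‖ :=
  (summable_norm_sum_mul_antidiagonal_of_summable_norm (f := fun n => ‖a n‖)
    (g := fun n => ‖b n‖) (by simpa using ha) (by simpa using hb)).of_norm

lemma summable_norm_convSeq : Summable fun n => ‖convSeq a b n‖ :=
  (summable_sum_norm_mul_antidiagonal ha hb).of_nonneg_of_le (fun _ => norm_nonneg _)
    (norm_convSeq_le a b)

lemma tsum_norm_convSeq_le : ∑' n, ‖convSeq a b n‖ ≤ (∑' n, ‖a n‖) * ∑' n, ‖b n‖ := by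
  rw [tsum_mul_tsum_eq_tsum_sum_antidiagonal_of_summable_norm (by simpa using ha)
    (by simpa using hb)]
  exact (summable_norm_convSeq ha hb).tsum_le_tsum (norm_convSeq_le a b)
    (summable_sum_norm_mul_antidiagonal ha hb)

end LOne

section Weighted

variable {σ : ℕ → ℝ} {c : ℝ}

lemma weight_le_of_add_eq (hreg : ∀ n j : ℕ, n ≤ 2 * j → j ≤ n → σ n ≤ c * σ j)
    {k l n : ℕ} (h : k + l = n) : σ n ≤ c * σ k ∨ σ n ≤ c * σ l := by
  rcases le_total (2 * l) n with hl | hl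
  · exact .inl (hreg n k (by omega) (by omega))
  · exact .inr (hreg n l hl (by omega))

lemma norm_mul_weight_le_iSup {a : ℕ → ℂ} (ha : MemLinfSigma σ a) (m : ℕ) :
    ‖a m‖ * σ m ≤ ⨆ m, ‖a m‖ * σ m :=
  le_ciSup ha.2 m

lemma iSup_norm_mul_weight_nonneg (hσ : ∀ n, 0 ≤ σ n) (a : ℕ → ℂ) :
    0 ≤ ⨆ m, ‖a m‖ * σ m :=
  Real.iSup_nonneg fun m => mul_nonneg (norm_nonneg _) (hσ m)

variable (hσ : ∀ n, 0 ≤ σ n) (hc : 0 ≤ c)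
  (hreg : ∀ n j : ℕ, n ≤ 2 * j → j ≤ n → σ n ≤ c * σ j)
  {a b : ℕ → ℂ} (ha : MemLinfSigma σ a) (hb : MemLinfSigma σ b)
include hσ hc hreg ha hb

lemma norm_mul_norm_mul_weight_le {k l n : ℕ} (h : k + l = n) :
    ‖a k‖ * ‖b l‖ * σ n ≤
      c * ((⨆ m, ‖a m‖ * σ m) * ‖b l‖ + (⨆ m, ‖b m‖ * σ m) * ‖a k‖) := by
  have hA := norm_mul_weight_le_iSup ha k
  have hB := norm_mul_weight_le_iSup hb l
  have hA₀ := iSup_norm_mul_weight_nonneg hσ a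
  have hB₀ := iSup_norm_mul_weight_nonneg hσ b
  have hak := norm_nonneg (a k)
  have hbl := norm_nonneg (b l)
  rcases weight_le_of_add_eq hreg h with hk | hl
  · calc ‖a k‖ * ‖b l‖ * σ n ≤ ‖a k‖ * ‖b l‖ * (c * σ k) := by gcongr
      _ = c * ((‖a k‖ * σ k) * ‖b l‖) := by ring
      _ ≤ _ := by gcongr; nlinarith
  · calc ‖a k‖ * ‖b l‖ * σ n ≤ ‖a k‖ * ‖b l‖ * (c * σ l) := by gcongr
      _ = c * ((‖b l‖ * σ l) * ‖a k‖) := by ring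
      _ ≤ _ := by gcongr; nlinarith

lemma norm_convSeq_mul_weight_le (n : ℕ) :
    ‖convSeq a b n‖ * σ n ≤
      c * ((⨆ m, ‖a m‖ * σ m) * ∑' m, ‖b m‖ + (⨆ m, ‖b m‖ * σ m) * ∑' m, ‖a m‖) := by
  have partial_sum_le {f : ℕ → ℂ} (hf : Summable fun m => ‖f m‖) :
      ∑ m ∈ range (n + 1), ‖f m‖ ≤ ∑' m, ‖f m‖ :=
    hf.sum_le_tsum _ fun _ _ => norm_nonneg _
  calc ‖convSeq a b n‖ * σ n
      ≤ ∑ kl ∈ antidiagonal n, ‖a kl.1‖ * ‖b kl.2‖ * σ n := by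
        rw [← sum_mul]; gcongr; exacts [hσ n, norm_convSeq_le a b n]
    _ ≤ ∑ kl ∈ antidiagonal n,
          c * ((⨆ m, ‖a m‖ * σ m) * ‖b kl.2‖ + (⨆ m, ‖b m‖ * σ m) * ‖a kl.1‖) :=
        sum_le_sum fun kl hkl =>
          norm_mul_norm_mul_weight_le hσ hc hreg ha hb (mem_antidiagonal.mp hkl)
    _ = c * ((⨆ m, ‖a m‖ * σ m) * ∑ l ∈ range (n + 1), ‖b l‖ +
          (⨆ m, ‖b m‖ * σ m) * ∑ k ∈ range (n + 1), ‖a k‖) := by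
        rw [← mul_sum, sum_add_distrib, ← mul_sum, ← mul_sum, ← Nat.sum_antidiagonal_swap,
          Nat.sum_antidiagonal_eq_sum_range_succ_mk, Nat.sum_antidiagonal_eq_sum_range_succ_mk]
        rfl
    _ ≤ _ := by
        gcongr
        exacts [iSup_norm_mul_weight_nonneg hσ a, partial_sum_le hb.1,
          iSup_norm_mul_weight_nonneg hσ b, partial_sum_le ha.1]

end Weighted

theorem stmt_13_general (σ : ℕ → ℝ) (c : ℝ) (hσ : ∀ n, 0 < σ n)
    (hreg : ∀ n j : ℕ, n ≤ 2 * j → j ≤ n → σ n ≤ c * σ j)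
    (a b : ℕ → ℂ) (ha : MemLinfSigma σ a) (hb : MemLinfSigma σ b) :
    MemLinfSigma σ (convSeq a b) ∧
    seqNorm σ (convSeq a b) ≤ (2 * c + 1) * (seqNorm σ a * seqNorm σ b) := by
  have hσ₀ : ∀ n, 0 ≤ σ n := fun n => (hσ n).le
  have hc : 0 ≤ c := by
    have := hreg 0 0 le_rfl le_rfl
    nlinarith [hσ 0]
  have hweighted := norm_convSeq_mul_weight_le hσ₀ hc hreg ha hb
  refine ⟨⟨summable_norm_convSeq ha.1 hb.1, ⟨_, Set.forall_mem_range.2 hweighted⟩⟩, ?_⟩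
  have hA₀ := iSup_norm_mul_weight_nonneg hσ₀ a
  have hB₀ := iSup_norm_mul_weight_nonneg hσ₀ b
  have hA₁ : 0 ≤ ∑' n, ‖a n‖ := tsum_nonneg fun _ => norm_nonneg _
  have hB₁ : 0 ≤ ∑' n, ‖b n‖ := tsum_nonneg fun _ => norm_nonneg _
  have hconv := add_le_add (ciSup_le hweighted) (tsum_norm_convSeq_le ha.1 hb.1)
  unfold seqNorm
  nlinarith [mul_nonneg hA₀ hB₀, mul_nonneg hA₀ hB₁, mul_nonneg hB₀ hA₁, mul_nonneg hA₁ hB₁]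

theorem stmt_13 (σ : ℕ → ℝ) (c : ℝ) (hσ : ∀ n, 0 < σ n) (hc : 0 < c)
    (hreg : ∀ n j : ℕ, n ≤ 2 * j → j ≤ n → σ n ≤ c * σ j)
    (a b : ℕ → ℂ) (ha : MemLinfSigma σ a) (hb : MemLinfSigma σ b) :
    MemLinfSigma σ (convSeq a b) ∧
    seqNorm σ (convSeq a b) ≤ (2 * c + 1) * (seqNorm σ a * seqNorm σ b) :=
  stmt_13_general σ c hσ hreg a b ha hb
end
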